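/- arXiv:1406.1168 — 2 statements merged into one kernel-verified Lean document; each statement's English description precedes it below -/
import Mathlib

section
/- Let K be a subfield of ℂ and let f : ℕ → ℂ be a function with f(n) → α as n → ∞, where α is transcendental over K. Then f is not an algebraic function over K: there do not exist polynomials q₀, …, q_k ∈ K[X] with q_k ≠ 0 such that q_k(n)·f(n)^k + q_{k-1}(n)·f(n)^{k-1} + ⋯ + q₁(n)·f(n) + q₀(n) = 0 for all n. -/
/-!
Let `d` be the largest degree of the `q i`. Dividing the relation `∑ q i (n) * f n ^ i = 0` by
`n ^ d` and letting `n → ∞` gives `∑ c i * α ^ i = 0`, where `c i` is the coefficient of `X ^ d`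
in `q i`. Some `c i` is nonzero, so `α` is algebraic over `K`.
-/

open Filter Polynomial Finset

open Bornology Topology

theorem Polynomial.tendsto_aeval_div_pow_cobounded {R 𝕜 : Type*} [CommSemiring R] [NormedField 𝕜]
    [Algebra R 𝕜] (p : R[X]) {d : ℕ} (hd : p.natDegree ≤ d) :
    Tendsto (fun x : 𝕜 => aeval x p / x ^ d) (cobounded 𝕜) (𝓝 (algebraMap R 𝕜 (p.coeff d))) := by
  -- `x⁻ᵈ p(x)` is the reflected polynomial evaluated at `x⁻¹`.
  have hreflect : Tendsto (fun x : 𝕜 => aeval x⁻¹ (p.reflect d)) (cobounded 𝕜)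
      (𝓝 (algebraMap R 𝕜 (p.coeff d))) := by
    have := ((p.reflect d).continuous_aeval.tendsto (0 : 𝕜)).comp tendsto_inv₀_cobounded
    rwa [← coeff_zero_eq_aeval_zero', coeff_reflect, revAt_le (Nat.zero_le d)] at this
  refine hreflect.congr' ?_
  filter_upwards [eventually_ne_cobounded 0] with x hx
  let _ : Invertible x := invertibleOfNonzero hx
  rw [eq_div_iff (pow_ne_zero d hx), aeval_def, aeval_def, ← invOf_eq_inv x,
    eval₂_reflect_mul_pow _ _ _ _ hd]

theorem Polynomial.aeval_sum_C_coeff_mul_X_pow_eq_zero {R 𝕜 ι : Type*} [CommSemiring R]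
    [NormedField 𝕜] [Algebra R 𝕜] {l : Filter ι} [l.NeBot] {x f : ι → 𝕜} {α : 𝕜}
    (hx : Tendsto x l (cobounded 𝕜)) (hf : Tendsto f l (𝓝 α)) {s : Finset ℕ} {q : ℕ → R[X]}
    {d : ℕ} (hd : ∀ i ∈ s, (q i).natDegree ≤ d)
    (h : ∀ᶠ n in l, ∑ i ∈ s, aeval (x n) (q i) * f n ^ i = 0) :
    aeval α (∑ i ∈ s, C ((q i).coeff d) * X ^ i) = 0 := by
  have hlim : Tendsto (fun n => ∑ i ∈ s, aeval (x n) (q i) / x n ^ d * f n ^ i) l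
      (𝓝 (aeval α (∑ i ∈ s, C ((q i).coeff d) * X ^ i))) := by
    simp only [map_sum, map_mul, aeval_C, map_pow, aeval_X]
    exact tendsto_finsetSum _ fun i hi =>
      (((q i).tendsto_aeval_div_pow_cobounded (hd i hi)).comp hx).mul (hf.pow i)
  refine tendsto_nhds_unique hlim (tendsto_const_nhds.congr' ?_)
  filter_upwards [h] with n hn
  simp_rw [div_mul_eq_mul_div, ← Finset.sum_div, hn, zero_div]

theorem Polynomial.exists_natDegree_le_and_coeff_ne_zero {R ι : Type*} [Semiring R]
    {s : Finset ι} {q : ι → R[X]} (h : ∃ i ∈ s, q i ≠ 0) :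
    ∃ d, (∀ i ∈ s, (q i).natDegree ≤ d) ∧ ∃ i ∈ s, (q i).coeff d ≠ 0 := by
  classical
  obtain ⟨i, hi, hmax⟩ := (s.filter (q · ≠ 0)).exists_max_image (fun i => (q i).natDegree)
    (by simpa [Finset.Nonempty] using h)
  rw [Finset.mem_filter] at hi
  refine ⟨(q i).natDegree, fun j hj => ?_, i, hi.1, leadingCoeff_ne_zero.mpr hi.2⟩
  by_cases hqj : q j = 0
  · simp [hqj]
  · exact hmax j (Finset.mem_filter.mpr ⟨hj, hqj⟩)

theorem Polynomial.sum_C_mul_X_pow_ne_zero {R : Type*} [Semiring R] {s : Finset ℕ} {c : ℕ → R}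
    {i : ℕ} (hi : i ∈ s) (hc : c i ≠ 0) : ∑ j ∈ s, C (c j) * X ^ j ≠ 0 := by
  intro h
  apply hc
  simpa [finsetSum_coeff, coeff_C_mul, coeff_X_pow, hi] using congrArg (coeff · i) h

theorem not_algebraic_function_of_tendsto_transcendental
    (K : Subfield ℂ) (f : ℕ → ℂ) (α : ℂ)
    (hlim : Tendsto f atTop (nhds α))
    (htr : Transcendental K α) :
    ¬ ∃ (k : ℕ) (q : ℕ → Polynomial K), q k ≠ 0 ∧
      ∀ n : ℕ, ∑ i ∈ Finset.range (k + 1),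
        Polynomial.aeval (n : ℂ) (q i) * f n ^ i = 0 := by
  rintro ⟨k, q, hqk, hq⟩
  obtain ⟨d, hd, i, hi, hqi⟩ :=
    exists_natDegree_le_and_coeff_ne_zero ⟨k, Finset.self_mem_range_succ k, hqk⟩
  exact htr ⟨_, sum_C_mul_X_pow_ne_zero hi hqi,
    aeval_sum_C_coeff_mul_X_pow_eq_zero tendsto_natCast_atTop_cobounded hlim hd
      (Eventually.of_forall hq)⟩
end

section
/- Let f : ℕ → ℂ satisfy f(n) → α as n → ∞ where α is a transcendental number (transcendental over ℚ). Then f is not an algebraic function over the field of algebraic numbers: there is no nonzero tuple of polynomials q₀, …, q_k with algebraic coefficients such that q_k(n) f(n)^k + ⋯ + q₀(n) = 0 for all n. -/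
/-!
Let `d` be the largest degree among the `qᵢ`. Dividing the relation at `n` by `nᵈ` and letting
`n → ∞` gives `∑ᵢ cᵢ αⁱ = 0`, where `cᵢ` is the coefficient of `Xᵈ` in `qᵢ`; some `cᵢ` is the
leading coefficient of a `qᵢ ≠ 0`, so `α` is a root of a nonzero polynomial with algebraic
coefficients, hence algebraic.
-/

open Filter Polynomial Finset Bornology Topology

namespace Polynomial

theorem exists_natDegree_le_and_coeff_ne_zero_s5 {R ι : Type*} [Semiring R] {s : Finset ι}
    {q : ι → R[X]} (h : ∃ i ∈ s, q i ≠ 0) :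
    ∃ d, (∀ i ∈ s, (q i).natDegree ≤ d) ∧ ∃ i ∈ s, (q i).coeff d ≠ 0 := by
  classical
  obtain ⟨i, hi, hqi⟩ := h
  obtain ⟨j, hj, hmax⟩ := (s.filter (q · ≠ 0)).exists_max_image (natDegree ∘ q)
    ⟨i, mem_filter.mpr ⟨hi, hqi⟩⟩
  rw [mem_filter] at hj
  refine ⟨(q j).natDegree, fun i hi => ?_, j, hj.1, leadingCoeff_ne_zero.mpr hj.2⟩
  by_cases hqi : q i = 0
  · simp [hqi]
  · exact hmax i (mem_filter.mpr ⟨hi, hqi⟩)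

theorem coeff_sum_C_mul_X_pow {R : Type*} [Semiring R] (s : Finset ℕ) (c : ℕ → R) (j : ℕ) :
    (∑ i ∈ s, C (c i) * X ^ i).coeff j = if j ∈ s then c j else 0 := by
  simp only [finsetSum_coeff, coeff_C_mul_X_pow, sum_ite_eq]

variable {𝕜 : Type*} [NormedField 𝕜]

theorem tendsto_eval_div_pow_cobounded (p : 𝕜[X]) {d : ℕ} (hd : p.natDegree ≤ d) :
    Tendsto (fun z => p.eval z / z ^ d) (cobounded 𝕜) (𝓝 (p.coeff d)) := by
  have hreflect : ∀ᶠ z in cobounded 𝕜, (reflect d p).eval z⁻¹ = p.eval z / z ^ d := by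
    filter_upwards [eventually_ne_cobounded 0] with z hz
    let := invertibleOfNonzero hz
    rw [eq_div_iff (pow_ne_zero d hz), ← invOf_eq_inv, eval, eval₂_reflect_mul_pow _ _ _ _ hd,
      eval]
  have hlim := ((reflect d p).continuous.tendsto 0).comp tendsto_inv₀_cobounded
  rw [← coeff_zero_eq_eval_zero, coeff_reflect, revAt_zero] at hlim
  exact hlim.congr' hreflect

end Polynomial

theorem sum_coeff_mul_pow_eq_zero_of_tendsto {𝕜 ι : Type*} [NormedField 𝕜] {l : Filter ι}
    [l.NeBot] {x f : ι → 𝕜} {α : 𝕜} (hx : Tendsto x l (cobounded 𝕜)) (hf : Tendsto f l (𝓝 α))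
    {s : Finset ℕ} {q : ℕ → 𝕜[X]} {d : ℕ} (hdeg : ∀ i ∈ s, (q i).natDegree ≤ d)
    (hrel : ∀ᶠ n in l, ∑ i ∈ s, (q i).eval (x n) * f n ^ i = 0) :
    ∑ i ∈ s, (q i).coeff d * α ^ i = 0 := by
  have hlim : Tendsto (fun n => ∑ i ∈ s, (q i).eval (x n) / x n ^ d * f n ^ i) l
      (𝓝 (∑ i ∈ s, (q i).coeff d * α ^ i)) :=
    tendsto_finsetSum _ fun i hi =>
      (((q i).tendsto_eval_div_pow_cobounded (hdeg i hi)).comp hx).mul (hf.pow i)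
  have hzero : ∀ᶠ n in l, ∑ i ∈ s, (q i).eval (x n) / x n ^ d * f n ^ i = 0 := by
    filter_upwards [hrel] with n hn
    simp only [div_mul_eq_mul_div, ← sum_div, hn, zero_div]
  exact tendsto_nhds_unique hlim (tendsto_const_nhds.congr' (hzero.mono fun _ h => h.symm))

theorem isAlgebraic_of_eval_eq_zero_of_isAlgebraic_coeff {K L : Type*} [Field K] [Field L]
    [Algebra K L] {p : L[X]} (hp : p ≠ 0) (hcoeff : ∀ n, IsAlgebraic K (p.coeff n)) {a : L}
    (ha : p.eval a = 0) : IsAlgebraic K a := by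
  obtain ⟨p', hmap⟩ : p ∈ lifts (algebraMap (algebraicClosure K L) L) :=
    (lifts_iff_coeff_lifts p).mpr fun n => ⟨⟨_, mem_algebraicClosure_iff.mpr (hcoeff n)⟩, rfl⟩
  rw [coe_mapRingHom] at hmap
  refine IsAlgebraic.restrictScalars K (S := algebraicClosure K L) ⟨p', ?_, ?_⟩
  · rintro rfl
    exact hp (by simp [← hmap])
  · rwa [aeval_def, eval₂_eq_eval_map, hmap]

theorem not_algebraic_function_over_algebraic_numbers_of_tendsto_transcendental
    (f : ℕ → ℂ) (α : ℂ)
    (hlim : Tendsto f atTop (nhds α))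
    (htr : Transcendental ℚ α) :
    ¬ ∃ (k : ℕ) (q : ℕ → Polynomial ℂ),
      (∀ i m, IsAlgebraic ℚ ((q i).coeff m)) ∧ q k ≠ 0 ∧
      ∀ n : ℕ, ∑ i ∈ Finset.range (k + 1),
        (q i).eval (n : ℂ) * f n ^ i = 0 := by
  rintro ⟨k, q, halg, hqk, hrel⟩
  obtain ⟨d, hdeg, i, hi, hci⟩ :=
    exists_natDegree_le_and_coeff_ne_zero_s5 ⟨k, self_mem_range_succ k, hqk⟩
  have hroot := sum_coeff_mul_pow_eq_zero_of_tendsto tendsto_natCast_atTop_cobounded hlim hdeg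
    (Eventually.of_forall hrel)
  set P : ℂ[X] := ∑ i ∈ range (k + 1), C ((q i).coeff d) * X ^ i
  refine htr (isAlgebraic_of_eval_eq_zero_of_isAlgebraic_coeff (p := P) ?_ ?_ ?_)
  · intro hP
    have := congr_arg (coeff · i) hP
    simp only [P, coeff_sum_C_mul_X_pow, hi, if_true, coeff_zero] at this
    exact hci this
  · intro n
    rw [coeff_sum_C_mul_X_pow]
    split_ifs
    exacts [halg n d, isAlgebraic_zero]
  · simpa [P, eval_finsetSum] using hroot
end
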